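/- arXiv:0801.3108 — 5 statements merged into one kernel-verified Lean document; each statement's English description precedes it below -/
import Mathlib

section
/- For the flag manifold U(3)/T³ with its invariant complex structure, the cobordism class is determined by: the coefficient of t³ in ∑_{σ∈S_3} σ( f(t(x_1−x_2))f(t(x_1−x_3))f(t(x_2−x_3)) / ((x_1−x_2)(x_1−x_3)(x_2−x_3)) ), where f(t)=1+a_1t+a_2t²+a_3t³, equals 6(a_1³ + a_1a_2 − a_3). Formally: this rational-function identity holds in ℚ(x_1,x_2,x_3)[a_1,a_2,a_3]. -/
open Polynomial Equiv

lemma c3_aux {F : Type*} [CommRing F] (P Q R : Polynomial F) :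
    (P*Q*R).coeff 3 =
      P.coeff 0 * Q.coeff 0 * R.coeff 3 + P.coeff 0 * Q.coeff 3 * R.coeff 0 +
      P.coeff 3 * Q.coeff 0 * R.coeff 0 +
      P.coeff 0 * Q.coeff 1 * R.coeff 2 + P.coeff 0 * Q.coeff 2 * R.coeff 1 +
      P.coeff 1 * Q.coeff 0 * R.coeff 2 + P.coeff 1 * Q.coeff 2 * R.coeff 0 +
      P.coeff 2 * Q.coeff 0 * R.coeff 1 + P.coeff 2 * Q.coeff 1 * R.coeff 0 +
      P.coeff 1 * Q.coeff 1 * R.coeff 1 := by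
  simp only [coeff_mul, Finset.Nat.sum_antidiagonal_eq_sum_range_succ_mk,
    Finset.sum_range_succ, Finset.sum_range_zero, Finset.sum_mul]
  ring

lemma cf0_aux {F : Type*} [CommRing F] (a b c p : F) :
    (C 1 + C (a*p) * X + C (b*p^2) * X^2 + C (c*p^3) * X^3 : Polynomial F).coeff 0 = 1 ∧
    (C 1 + C (a*p) * X + C (b*p^2) * X^2 + C (c*p^3) * X^3 : Polynomial F).coeff 1 = a*p ∧
    (C 1 + C (a*p) * X + C (b*p^2) * X^2 + C (c*p^3) * X^3 : Polynomial F).coeff 2 = b*p^2 ∧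
    (C 1 + C (a*p) * X + C (b*p^2) * X^2 + C (c*p^3) * X^3 : Polynomial F).coeff 3 = c*p^3 := by
  refine ⟨?_, ?_, ?_, ?_⟩ <;>
    (simp only [coeff_add, coeff_C_mul, coeff_X_pow, coeff_X, coeff_C]; norm_num)

lemma cprod_aux {F : Type*} [CommRing F] (a b c p q r : F) :
    Polynomial.coeff ((C 1 + C (a*p) * X + C (b*p^2) * X^2 + C (c*p^3) * X^3) *
      (C 1 + C (a*q) * X + C (b*q^2) * X^2 + C (c*q^3) * X^3) *
      (C 1 + C (a*r) * X + C (b*r^2) * X^2 + C (c*r^3) * X^3)) 3 =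
    c*(p^3+q^3+r^3) + a*b*(p*q^2+p*r^2+q*p^2+q*r^2+r*p^2+r*q^2) + a^3*(p*q*r) := by
  rw [c3_aux]
  obtain ⟨h0p, h1p, h2p, h3p⟩ := cf0_aux a b c p
  obtain ⟨h0q, h1q, h2q, h3q⟩ := cf0_aux a b c q
  obtain ⟨h0r, h1r, h2r, h3r⟩ := cf0_aux a b c r
  rw [h0p, h1p, h2p, h3p, h0q, h1q, h2q, h3q, h0r, h1r, h2r, h3r]; ring

set_option maxHeartbeats 1600000 in
/-- for the flag manifold `U(3)/T³`, the coefficient of `t³` in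
`∑_{σ∈S₃} σ( f(t(x₁−x₂))f(t(x₁−x₃))f(t(x₂−x₃)) / ((x₁−x₂)(x₁−x₃)(x₂−x₃)) )`,
with `f(t) = 1 + a₁t + a₂t² + a₃t³`, equals `6(a₁³ + a₁a₂ − a₃)`.  The identity in
`ℚ(x₁,x₂,x₃)[a₁,a₂,a₃]` is expressed by its validity for all distinct values of the
`x_i` and all values of the `a_i` in a field of characteristic `0`. -/
theorem flag_U3_cobordism_class {F : Type*} [Field F] [CharZero F]
    (x : Fin 3 → F) (hx : Function.Injective x) (a : Fin 3 → F) :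
    (let f : F → Polynomial F := fun c =>
      C 1 + C (a 0 * c) * X + C (a 1 * c ^ 2) * X ^ 2 + C (a 2 * c ^ 3) * X ^ 3
    Polynomial.coeff
      (∑ σ : Perm (Fin 3),
        C (((x (σ 0) - x (σ 1)) * (x (σ 0) - x (σ 2)) * (x (σ 1) - x (σ 2)))⁻¹) *
          (f (x (σ 0) - x (σ 1)) * f (x (σ 0) - x (σ 2)) * f (x (σ 1) - x (σ 2)))) 3) =
      6 * (a 0 ^ 3 + a 0 * a 1 - a 2) := by
  dsimp only
  have huniv : (Finset.univ : Finset (Perm (Fin 3))) =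
      {Equiv.refl _, Equiv.swap 0 1, Equiv.swap 0 2, Equiv.swap 1 2,
       Equiv.swap 0 1 * Equiv.swap 1 2, Equiv.swap 1 2 * Equiv.swap 0 1} := by decide
  rw [huniv, Finset.sum_insert (by decide), Finset.sum_insert (by decide),
    Finset.sum_insert (by decide), Finset.sum_insert (by decide),
    Finset.sum_insert (by decide), Finset.sum_singleton]
  have h01 : x 0 - x 1 ≠ 0 := sub_ne_zero_of_ne (fun h => absurd (hx h) (by decide))
  have h02 : x 0 - x 2 ≠ 0 := sub_ne_zero_of_ne (fun h => absurd (hx h) (by decide))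
  have h12 : x 1 - x 2 ≠ 0 := sub_ne_zero_of_ne (fun h => absurd (hx h) (by decide))
  have h10 : x 1 - x 0 ≠ 0 := sub_ne_zero_of_ne (fun h => absurd (hx h) (by decide))
  have h20 : x 2 - x 0 ≠ 0 := sub_ne_zero_of_ne (fun h => absurd (hx h) (by decide))
  have h21 : x 2 - x 1 ≠ 0 := sub_ne_zero_of_ne (fun h => absurd (hx h) (by decide))
  simp only [Perm.mul_apply, Equiv.refl_apply, Equiv.swap_apply_left,
    Equiv.swap_apply_right, show (Equiv.swap (0:Fin 3) 1) 2 = 2 by decide,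
    show (Equiv.swap (0:Fin 3) 2) 1 = 1 by decide,
    show (Equiv.swap (1:Fin 3) 2) 0 = 0 by decide,
    coeff_add, coeff_C_mul, cprod_aux]
  have e1 : ((x 1 - x 0) * (x 1 - x 2) * (x 0 - x 2))⁻¹ =
      -((x 0 - x 1) * (x 0 - x 2) * (x 1 - x 2))⁻¹ := by
    rw [← inv_neg]; congr 1; ring
  have e2 : ((x 2 - x 1) * (x 2 - x 0) * (x 1 - x 0))⁻¹ =
      -((x 0 - x 1) * (x 0 - x 2) * (x 1 - x 2))⁻¹ := by
    rw [← inv_neg]; congr 1; ring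
  have e3 : ((x 0 - x 2) * (x 0 - x 1) * (x 2 - x 1))⁻¹ =
      -((x 0 - x 1) * (x 0 - x 2) * (x 1 - x 2))⁻¹ := by
    rw [← inv_neg]; congr 1; ring
  have e4 : ((x 1 - x 2) * (x 1 - x 0) * (x 2 - x 0))⁻¹ =
      ((x 0 - x 1) * (x 0 - x 2) * (x 1 - x 2))⁻¹ := by
    congr 1; ring
  have e5 : ((x 2 - x 0) * (x 2 - x 1) * (x 0 - x 1))⁻¹ =
      ((x 0 - x 1) * (x 0 - x 2) * (x 1 - x 2))⁻¹ := by
    congr 1; ring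
  rw [e1, e2, e3, e4, e5]
  have hD : (x 0 - x 1) * (x 0 - x 2) * (x 1 - x 2) ≠ 0 :=
    mul_ne_zero (mul_ne_zero h01 h02) h12
  field_simp
  ring
end

section
/- In ℚ(x_1,x_2,x_3), the following identity of the t-coefficients holds: in the expansion of ∑_{σ∈S_3} σ( ∏_{i<j} f(t(x_i−x_j)) / ∏_{i<j}(x_i−x_j) ) as a power series in t with f(t) = 1 + ∑_{i≥1} a_i t^i, the coefficients of t^0, t^1 and t^2 all vanish. -/
/-!
Since `(x_{σ0} - x_{σ1})(x_{σ0} - x_{σ2})(x_{σ1} - x_{σ2}) = sign σ · V(x)` (a permuted Vandermonde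
determinant), the sum is `V(x)⁻¹` times the antisymmetrization `∑_σ sign σ · P(x ∘ σ)` of
`P(y) = ∏_{i<j} f(t (y_i - y_j))`. The `tᵐ`-coefficient of `P(y)` is a polynomial of degree `m` in
`y`, and antisymmetrizing a polynomial of degree `< 3 = deg V` gives `0`.
-/

open Equiv PowerSeries

section ConstantCoeffOne

variable {R : Type*} [CommSemiring R] {p q : R⟦X⟧}

theorem coeff_one_mul_of_constantCoeff_eq_one (hp : constantCoeff p = 1)
    (hq : constantCoeff q = 1) : coeff 1 (p * q) = coeff 1 p + coeff 1 q := by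
  rw [coeff_mul, Finset.Nat.sum_antidiagonal_succ, Finset.Nat.antidiagonal_zero,
    Finset.sum_singleton]
  simp only [coeff_zero_eq_constantCoeff_apply, hp, hq, one_mul, mul_one, add_comm]

theorem coeff_two_mul_of_constantCoeff_eq_one (hp : constantCoeff p = 1)
    (hq : constantCoeff q = 1) :
    coeff 2 (p * q) = coeff 2 p + coeff 1 p * coeff 1 q + coeff 2 q := by
  rw [coeff_mul, Finset.Nat.sum_antidiagonal_succ, Finset.Nat.sum_antidiagonal_succ,
    Finset.Nat.antidiagonal_zero, Finset.sum_singleton]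
  simp only [coeff_zero_eq_constantCoeff_apply, hp, hq, one_mul, mul_one]
  ring

end ConstantCoeffOne

theorem Int.cast_units_inv {F : Type*} [DivisionRing F] (u : ℤˣ) : ((u : ℤ) : F)⁻¹ = u := by
  refine inv_eq_of_mul_eq_one_right ?_
  rw [← Int.cast_mul, ← Units.val_mul, Int.units_mul_self, Units.val_one, Int.cast_one]

theorem sum_perm_fin_three {M : Type*} [AddCommMonoid M] (g : Perm (Fin 3) → M) :
    ∑ σ, g σ = g 1 + g (swap 0 1) + g (swap 0 2) + g (swap 1 2) + g (finRotate 3) +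
      g (finRotate 3 * finRotate 3) := by
  rw [show (Finset.univ : Finset (Perm (Fin 3))) =
      {1, swap 0 1, swap 0 2, swap 1 2, finRotate 3, finRotate 3 * finRotate 3} by decide,
    Finset.sum_insert (by decide), Finset.sum_insert (by decide), Finset.sum_insert (by decide),
    Finset.sum_insert (by decide), Finset.sum_insert (by decide), Finset.sum_singleton]
  simp only [add_assoc]

section FinThree

variable {R : Type*} [CommRing R]

theorem sum_sign_mul_comp_perm_fin_three (g : (Fin 3 → R) → R) (x : Fin 3 → R) :
    ∑ σ : Perm (Fin 3), (Perm.sign σ : R) * g (x ∘ σ) =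
      g ![x 0, x 1, x 2] - g ![x 1, x 0, x 2] - g ![x 2, x 1, x 0] - g ![x 0, x 2, x 1] +
        g ![x 1, x 2, x 0] + g ![x 2, x 0, x 1] := by
  have hcomp (σ : Perm (Fin 3)) : x ∘ σ = ![x (σ 0), x (σ 1), x (σ 2)] := by
    ext i; fin_cases i <;> rfl
  simp only [sum_perm_fin_three, hcomp]
  simp +decide [sign_finRotate, swap_apply_of_ne_of_ne, sub_eq_add_neg]

theorem sub_mul_sub_mul_sub_comp_perm (y : Fin 3 → R) (σ : Perm (Fin 3)) :
    (y (σ 0) - y (σ 1)) * (y (σ 0) - y (σ 2)) * (y (σ 1) - y (σ 2)) =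
      Perm.sign σ * ((y 0 - y 1) * (y 0 - y 2) * (y 1 - y 2)) := by
  have hdet (z : Fin 3 → R) :
      (z 0 - z 1) * (z 0 - z 2) * (z 1 - z 2) = -(Matrix.vandermonde z).det := by
    simp only [Matrix.vandermonde, Matrix.det_fin_three, Matrix.of_apply, Fin.val_zero,
      Fin.val_one, Fin.val_two, pow_zero, pow_one, one_mul, mul_one]
    ring
  calc _ = -(Matrix.vandermonde (y ∘ σ)).det := hdet (y ∘ σ)
    _ = _ := by rw [hdet, mul_neg, ← Matrix.det_permute]; rfl

end FinThree

section RootProduct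

variable {R : Type*} [CommRing R] (a : ℕ → R)

/-- `f (c t)` for `f t = 1 + ∑_{i ≥ 1} a i * tⁱ` (the value `a 0` plays no role). -/
noncomputable def scaledSeries (c : R) : R⟦X⟧ :=
  mk fun m => if m = 0 then 1 else a m * c ^ m

@[simp]
theorem constantCoeff_scaledSeries (c : R) : constantCoeff (scaledSeries a c) = 1 := by
  simp [scaledSeries]

@[simp]
theorem coeff_scaledSeries_succ (c : R) (n : ℕ) :
    coeff (n + 1) (scaledSeries a c) = a (n + 1) * c ^ (n + 1) := by
  simp [scaledSeries]

/-- `∏_{i<j} f (t (y i - y j))`, the product over the tangent weights at a fixed point. -/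
noncomputable def rootProduct (y : Fin 3 → R) : R⟦X⟧ :=
  scaledSeries a (y 0 - y 1) * scaledSeries a (y 0 - y 2) * scaledSeries a (y 1 - y 2)

theorem coeff_zero_rootProduct (y : Fin 3 → R) : coeff 0 (rootProduct a y) = 1 := by
  simp [rootProduct]

theorem coeff_one_rootProduct (y : Fin 3 → R) :
    coeff 1 (rootProduct a y) = a 1 * ((y 0 - y 1) + (y 0 - y 2) + (y 1 - y 2)) := by
  simp only [rootProduct, map_mul, constantCoeff_scaledSeries, mul_one,
    coeff_one_mul_of_constantCoeff_eq_one, coeff_scaledSeries_succ, zero_add, pow_one]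
  ring

theorem coeff_two_rootProduct (y : Fin 3 → R) :
    coeff 2 (rootProduct a y) =
      a 2 * ((y 0 - y 1) ^ 2 + (y 0 - y 2) ^ 2 + (y 1 - y 2) ^ 2) +
        a 1 ^ 2 * ((y 0 - y 1) * (y 0 - y 2) + (y 0 - y 1) * (y 1 - y 2) +
          (y 0 - y 2) * (y 1 - y 2)) := by
  simp only [rootProduct, map_mul, constantCoeff_scaledSeries, mul_one,
    coeff_two_mul_of_constantCoeff_eq_one, coeff_one_mul_of_constantCoeff_eq_one,
    coeff_scaledSeries_succ, Nat.reduceAdd, zero_add, pow_one]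
  ring

theorem sum_sign_mul_coeff_rootProduct_eq_zero (x : Fin 3 → R) {m : ℕ} (hm : m < 3) :
    ∑ σ : Perm (Fin 3), (Perm.sign σ : R) * coeff m (rootProduct a (x ∘ σ)) = 0 := by
  rw [sum_sign_mul_comp_perm_fin_three (fun y => coeff m (rootProduct a y))]
  interval_cases m
  · simp only [coeff_zero_rootProduct]
    ring
  · simp only [coeff_one_rootProduct, Matrix.cons_val]
    ring
  · simp only [coeff_two_rootProduct, Matrix.cons_val]
    ring

end RootProduct

theorem flag_U3_low_coefficients_vanish_general {F : Type*} [Field F]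
    (x : Fin 3 → F) (a : ℕ → F) :
    (let f : F → PowerSeries F := fun c =>
      PowerSeries.mk fun m => if m = 0 then 1 else a m * c ^ m
    ∀ m : ℕ, m < 3 →
      PowerSeries.coeff m
        (∑ σ : Perm (Fin 3),
          PowerSeries.C (((x (σ 0) - x (σ 1)) * (x (σ 0) - x (σ 2)) * (x (σ 1) - x (σ 2)))⁻¹) *
            (f (x (σ 0) - x (σ 1)) * f (x (σ 0) - x (σ 2)) * f (x (σ 1) - x (σ 2)))) = 0) := by
  intro f m hm
  have hterm (σ : Perm (Fin 3)) :
      coeff m (C (((x (σ 0) - x (σ 1)) * (x (σ 0) - x (σ 2)) * (x (σ 1) - x (σ 2)))⁻¹) *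
          (f (x (σ 0) - x (σ 1)) * f (x (σ 0) - x (σ 2)) * f (x (σ 1) - x (σ 2)))) =
        ((x 0 - x 1) * (x 0 - x 2) * (x 1 - x 2))⁻¹ *
          ((Perm.sign σ : F) * coeff m (rootProduct a (x ∘ σ))) := by
    rw [coeff_C_mul, sub_mul_sub_mul_sub_comp_perm, mul_inv, Int.cast_units_inv]
    change _ * coeff m (rootProduct a (x ∘ σ)) = _
    ring
  rw [map_sum, Finset.sum_congr rfl fun σ _ => hterm σ, ← Finset.mul_sum,
    sum_sign_mul_coeff_rootProduct_eq_zero a x hm, mul_zero]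

/-- for the flag manifold `U(3)/T³`, in the expansion of
`∑_{σ∈S₃} σ( ∏_{i<j} f(t(x_i−x_j)) / ∏_{i<j}(x_i−x_j) )` as a power series in `t`,
with `f(t) = 1 + ∑_{i≥1} a_i tⁱ` a formal series with constant term `1`, the
coefficients of `t⁰`, `t¹` and `t²` all vanish (for all distinct values of the `x_i`
and all values of the formal coefficients `a_i`). -/
theorem flag_U3_low_coefficients_vanish {F : Type*} [Field F] [CharZero F]
    (x : Fin 3 → F) (hx : Function.Injective x) (a : ℕ → F) :
    (let f : F → PowerSeries F := fun c =>
      PowerSeries.mk fun m => if m = 0 then 1 else a m * c ^ m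
    ∀ m : ℕ, m < 3 →
      PowerSeries.coeff m
        (∑ σ : Perm (Fin 3),
          PowerSeries.C (((x (σ 0) - x (σ 1)) * (x (σ 0) - x (σ 2)) * (x (σ 1) - x (σ 2)))⁻¹) *
            (f (x (σ 0) - x (σ 1)) * f (x (σ 0) - x (σ 2)) * f (x (σ 1) - x (σ 2)))) = 0) :=
  flag_U3_low_coefficients_vanish_general x a
end

section
/- For the flag manifold U(n)/T^n with n > 3 and m = n(n−1)/2, the top Newton characteristic number s_m vanishes: ∑_{1≤i<j≤n} L((x_i−x_j)^m) = 0, where L(P) = (1/Δ_n)∑_{σ∈S_n} sign(σ)σ(P). Moreover s_1(U(2)/T²) = 2 and s_3(U(3)/T³) = −6. -/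
open MvPolynomial Equiv

lemma inner_sum_zero (n : ℕ) (hn : 3 < n) (i j : Fin n) (m : ℕ) :
    ∑ σ : Perm (Fin n), (Perm.sign σ : ℤ) •
      rename σ (((X i : MvPolynomial (Fin n) ℚ) - X j) ^ m) = 0 := by
  have hcard : 1 < (Finset.univ \ {i, j} : Finset (Fin n)).card := by
    have h1 : ({i, j} : Finset (Fin n)).card ≤ 2 :=
      (Finset.card_insert_le _ _).trans (by simp)
    have h2 : (Finset.univ \ {i, j} : Finset (Fin n)).card =
        Fintype.card (Fin n) - ({i, j} : Finset (Fin n)).card :=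
      Finset.card_sdiff_of_subset (Finset.subset_univ _)
    simp only [Fintype.card_fin] at h2
    omega
  obtain ⟨a, ha, b, hb, hab⟩ := Finset.one_lt_card.mp hcard
  simp only [Finset.mem_sdiff, Finset.mem_insert, Finset.mem_singleton, not_or] at ha hb
  obtain ⟨-, hai, haj⟩ := ha
  obtain ⟨-, hbi, hbj⟩ := hb
  set τ : Perm (Fin n) := Equiv.swap a b with hτ
  set P : MvPolynomial (Fin n) ℚ := (X i - X j) ^ m with hP
  have hτi : τ i = i := Equiv.swap_apply_of_ne_of_ne (fun h => hai h.symm) (fun h => hbi h.symm)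
  have hτj : τ j = j := Equiv.swap_apply_of_ne_of_ne (fun h => haj h.symm) (fun h => hbj h.symm)
  have hren : rename (⇑τ) P = P := by
    simp [hP, map_pow, map_sub, rename_X, hτi, hτj]
  have hsign : Perm.sign τ = -1 := Equiv.Perm.sign_swap hab
  set S := ∑ σ : Perm (Fin n), (Perm.sign σ : ℤ) • rename σ P with hS
  have key : S = -S := by
    calc S = ∑ σ : Perm (Fin n), (Perm.sign (σ * τ) : ℤ) • rename (⇑(σ * τ)) P := by
          rw [hS, ← Equiv.sum_comp (Equiv.mulRight τ)
            (fun σ : Perm (Fin n) => (Perm.sign σ : ℤ) • rename (⇑σ) P)]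
          simp only [Equiv.coe_mulRight]
    _ = ∑ σ : Perm (Fin n), -((Perm.sign σ : ℤ) • rename (⇑σ) P) := by
        refine Finset.sum_congr rfl fun σ _ => ?_
        rw [Equiv.Perm.coe_mul, ← rename_rename, hren, Equiv.Perm.sign_mul, hsign]
        push_cast
        rw [mul_neg_one, neg_smul]
    _ = -S := by rw [← Finset.sum_neg_distrib]
  have h2 : S + S = 0 := by nth_rewrite 1 [key]; ring
  have h3 : (2 : MvPolynomial (Fin n) ℚ) * S = 0 := by rw [two_mul]; exact h2
  rcases mul_eq_zero.mp h3 with h | h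
  · exact absurd h two_ne_zero
  · exact h

/-- with `L(P) = (1/Δ_n)·∑_{σ∈S_n} sign(σ)·σ(P)` and `m = n(n−1)/2`, the
top Newton characteristic number of the flag manifold `U(n)/Tⁿ` satisfies
`s_m(U(n)/Tⁿ) = ∑_{i<j} L((x_i−x_j)^m) = 0` for all `n > 3`, while `s₁(U(2)/T²) = 2`
and `s₃(U(3)/T³) = −6`.  Clearing the Vandermonde denominator `Δ_n`, the claim
`∑_{i<j} L((x_i−x_j)^m) = c` becomes
`∑_{i<j} ∑_σ sign(σ)·σ((x_i−x_j)^m) = c·Δ_n`. -/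
theorem s_m_flag_manifolds :
    (∀ n : ℕ, 3 < n →
      ∑ p ∈ Finset.univ.filter (fun p : Fin n × Fin n => p.1 < p.2),
        ∑ σ : Perm (Fin n), (Perm.sign σ : ℤ) •
          rename σ (((X p.1 : MvPolynomial (Fin n) ℚ) - X p.2) ^ (n * (n - 1) / 2)) = 0)
    ∧
    (∑ p ∈ Finset.univ.filter (fun p : Fin 2 × Fin 2 => p.1 < p.2),
        ∑ σ : Perm (Fin 2), (Perm.sign σ : ℤ) •
          rename σ (((X p.1 : MvPolynomial (Fin 2) ℚ) - X p.2) ^ 1) =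
      (2 : ℤ) • ∏ p ∈ Finset.univ.filter (fun p : Fin 2 × Fin 2 => p.1 < p.2),
        ((X p.1 : MvPolynomial (Fin 2) ℚ) - X p.2))
    ∧
    ∑ p ∈ Finset.univ.filter (fun p : Fin 3 × Fin 3 => p.1 < p.2),
        ∑ σ : Perm (Fin 3), (Perm.sign σ : ℤ) •
          rename σ (((X p.1 : MvPolynomial (Fin 3) ℚ) - X p.2) ^ 3) =
      (-6 : ℤ) • ∏ p ∈ Finset.univ.filter (fun p : Fin 3 × Fin 3 => p.1 < p.2),
        ((X p.1 : MvPolynomial (Fin 3) ℚ) - X p.2) := by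
  refine ⟨fun n hn => Finset.sum_eq_zero fun p _ => inner_sum_zero n hn p.1 p.2 _, ?_, ?_⟩
  · rw [show (Finset.univ.filter (fun p : Fin 2 × Fin 2 => p.1 < p.2))
        = {((0:Fin 2),(1:Fin 2))} from by decide]
    rw [show (Finset.univ : Finset (Perm (Fin 2))) = {1, Equiv.swap 0 1} from by decide]
    simp (config := { decide := true }) only [Finset.sum_insert, Finset.sum_singleton,
      Finset.prod_singleton, Finset.mem_singleton]
    simp (config := { decide := true }) only [map_pow, map_sub, rename_X,
      Equiv.Perm.sign_swap (by decide : (0:Fin 2) ≠ 1), Equiv.Perm.sign_one,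
      Equiv.swap_apply_def, Equiv.Perm.one_apply]
    norm_num
    ring
  · rw [show (Finset.univ.filter (fun p : Fin 3 × Fin 3 => p.1 < p.2))
        = {((0:Fin 3),(1:Fin 3)), (0,2), (1,2)} from by decide]
    rw [show (Finset.univ : Finset (Perm (Fin 3))) =
        {1, Equiv.swap 0 1, Equiv.swap 0 2, Equiv.swap 1 2,
         Equiv.swap 0 1 * Equiv.swap 0 2, Equiv.swap 0 2 * Equiv.swap 0 1} from by decide]
    simp (config := { decide := true }) only [Finset.sum_insert, Finset.sum_singleton,
      Finset.prod_insert, Finset.prod_singleton, Finset.mem_insert, Finset.mem_singleton]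
    simp (config := { decide := true }) only [map_pow, map_sub, rename_X,
      Equiv.Perm.sign_mul, Equiv.Perm.sign_swap (by decide : (0:Fin 3) ≠ 1),
      Equiv.Perm.sign_swap (by decide : (0:Fin 3) ≠ 2),
      Equiv.Perm.sign_swap (by decide : (1:Fin 3) ≠ 2), Equiv.Perm.sign_one,
      Equiv.Perm.mul_apply, Equiv.swap_apply_def, Equiv.Perm.one_apply]
    norm_num
    ring
end

section
/- For U(4)/T⁴, the characteristic number s_{(1,0,0,0,1,0)} equals 80: explicitly, L((x_1−x_2)(x_3−x_4)^5 + (x_1−x_2)^5(x_3−x_4)) = 80, where L(P) = (1/Δ_4)·∑_{σ∈S_4} sign(σ)·σ(P) and Δ_4 = ∏_{1≤i<j≤4}(x_i−x_j). -/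
open MvPolynomial Equiv

private def pm0 : Perm (Fin 4) := ⟨![0,1,2,3], ![0,1,2,3], by decide, by decide⟩
private def pm1 : Perm (Fin 4) := ⟨![0,1,3,2], ![0,1,3,2], by decide, by decide⟩
private def pm2 : Perm (Fin 4) := ⟨![0,2,1,3], ![0,2,1,3], by decide, by decide⟩
private def pm3 : Perm (Fin 4) := ⟨![0,2,3,1], ![0,3,1,2], by decide, by decide⟩
private def pm4 : Perm (Fin 4) := ⟨![0,3,1,2], ![0,2,3,1], by decide, by decide⟩
private def pm5 : Perm (Fin 4) := ⟨![0,3,2,1], ![0,3,2,1], by decide, by decide⟩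
private def pm6 : Perm (Fin 4) := ⟨![1,0,2,3], ![1,0,2,3], by decide, by decide⟩
private def pm7 : Perm (Fin 4) := ⟨![1,0,3,2], ![1,0,3,2], by decide, by decide⟩
private def pm8 : Perm (Fin 4) := ⟨![1,2,0,3], ![2,0,1,3], by decide, by decide⟩
private def pm9 : Perm (Fin 4) := ⟨![1,2,3,0], ![3,0,1,2], by decide, by decide⟩
private def pm10 : Perm (Fin 4) := ⟨![1,3,0,2], ![2,0,3,1], by decide, by decide⟩
private def pm11 : Perm (Fin 4) := ⟨![1,3,2,0], ![3,0,2,1], by decide, by decide⟩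
private def pm12 : Perm (Fin 4) := ⟨![2,0,1,3], ![1,2,0,3], by decide, by decide⟩
private def pm13 : Perm (Fin 4) := ⟨![2,0,3,1], ![1,3,0,2], by decide, by decide⟩
private def pm14 : Perm (Fin 4) := ⟨![2,1,0,3], ![2,1,0,3], by decide, by decide⟩
private def pm15 : Perm (Fin 4) := ⟨![2,1,3,0], ![3,1,0,2], by decide, by decide⟩
private def pm16 : Perm (Fin 4) := ⟨![2,3,0,1], ![2,3,0,1], by decide, by decide⟩
private def pm17 : Perm (Fin 4) := ⟨![2,3,1,0], ![3,2,0,1], by decide, by decide⟩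
private def pm18 : Perm (Fin 4) := ⟨![3,0,1,2], ![1,2,3,0], by decide, by decide⟩
private def pm19 : Perm (Fin 4) := ⟨![3,0,2,1], ![1,3,2,0], by decide, by decide⟩
private def pm20 : Perm (Fin 4) := ⟨![3,1,0,2], ![2,1,3,0], by decide, by decide⟩
private def pm21 : Perm (Fin 4) := ⟨![3,1,2,0], ![3,1,2,0], by decide, by decide⟩
private def pm22 : Perm (Fin 4) := ⟨![3,2,0,1], ![2,3,1,0], by decide, by decide⟩
private def pm23 : Perm (Fin 4) := ⟨![3,2,1,0], ![3,2,1,0], by decide, by decide⟩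

private lemma renP (σ : Perm (Fin 4)) :
    rename σ (((X 0 - X 1) * (X 2 - X 3) ^ 5 + (X 0 - X 1) ^ 5 * (X 2 - X 3) : MvPolynomial (Fin 4) ℚ)) =
    (X (σ 0) - X (σ 1)) * (X (σ 2) - X (σ 3)) ^ 5 + (X (σ 0) - X (σ 1)) ^ 5 * (X (σ 2) - X (σ 3)) := by
  simp [map_add, map_mul, map_sub, map_pow, rename_X]

private lemma tm0 : ((Perm.sign pm0 : ℤˣ) : ℤ) • rename pm0 (((X 0 - X 1) * (X 2 - X 3) ^ 5 + (X 0 - X 1) ^ 5 * (X 2 - X 3) : MvPolynomial (Fin 4) ℚ)) = ((X 0 - X 1) * (X 2 - X 3) ^ 5 + (X 0 - X 1) ^ 5 * (X 2 - X 3) : MvPolynomial (Fin 4) ℚ) := by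
  rw [renP]
  rw [show ((Perm.sign pm0 : ℤˣ) : ℤ) = 1 from by decide]
  rw [show pm0 (0 : Fin 4) = (0 : Fin 4) from rfl, show pm0 (1 : Fin 4) = (1 : Fin 4) from rfl, show pm0 (2 : Fin 4) = (2 : Fin 4) from rfl, show pm0 (3 : Fin 4) = (3 : Fin 4) from rfl]
  rw [one_smul]
private lemma tm1 : ((Perm.sign pm1 : ℤˣ) : ℤ) • rename pm1 (((X 0 - X 1) * (X 2 - X 3) ^ 5 + (X 0 - X 1) ^ 5 * (X 2 - X 3) : MvPolynomial (Fin 4) ℚ)) = (-(((X 0 - X 1) * (X 3 - X 2) ^ 5 + (X 0 - X 1) ^ 5 * (X 3 - X 2))) : MvPolynomial (Fin 4) ℚ) := by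
  rw [renP]
  rw [show ((Perm.sign pm1 : ℤˣ) : ℤ) = -1 from by decide]
  rw [show pm1 (0 : Fin 4) = (0 : Fin 4) from rfl, show pm1 (1 : Fin 4) = (1 : Fin 4) from rfl, show pm1 (2 : Fin 4) = (3 : Fin 4) from rfl, show pm1 (3 : Fin 4) = (2 : Fin 4) from rfl]
  rw [neg_smul, one_smul]
private lemma tm2 : ((Perm.sign pm2 : ℤˣ) : ℤ) • rename pm2 (((X 0 - X 1) * (X 2 - X 3) ^ 5 + (X 0 - X 1) ^ 5 * (X 2 - X 3) : MvPolynomial (Fin 4) ℚ)) = (-(((X 0 - X 2) * (X 1 - X 3) ^ 5 + (X 0 - X 2) ^ 5 * (X 1 - X 3))) : MvPolynomial (Fin 4) ℚ) := by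
  rw [renP]
  rw [show ((Perm.sign pm2 : ℤˣ) : ℤ) = -1 from by decide]
  rw [show pm2 (0 : Fin 4) = (0 : Fin 4) from rfl, show pm2 (1 : Fin 4) = (2 : Fin 4) from rfl, show pm2 (2 : Fin 4) = (1 : Fin 4) from rfl, show pm2 (3 : Fin 4) = (3 : Fin 4) from rfl]
  rw [neg_smul, one_smul]
private lemma tm3 : ((Perm.sign pm3 : ℤˣ) : ℤ) • rename pm3 (((X 0 - X 1) * (X 2 - X 3) ^ 5 + (X 0 - X 1) ^ 5 * (X 2 - X 3) : MvPolynomial (Fin 4) ℚ)) = ((X 0 - X 2) * (X 3 - X 1) ^ 5 + (X 0 - X 2) ^ 5 * (X 3 - X 1) : MvPolynomial (Fin 4) ℚ) := by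
  rw [renP]
  rw [show ((Perm.sign pm3 : ℤˣ) : ℤ) = 1 from by decide]
  rw [show pm3 (0 : Fin 4) = (0 : Fin 4) from rfl, show pm3 (1 : Fin 4) = (2 : Fin 4) from rfl, show pm3 (2 : Fin 4) = (3 : Fin 4) from rfl, show pm3 (3 : Fin 4) = (1 : Fin 4) from rfl]
  rw [one_smul]
private lemma tm4 : ((Perm.sign pm4 : ℤˣ) : ℤ) • rename pm4 (((X 0 - X 1) * (X 2 - X 3) ^ 5 + (X 0 - X 1) ^ 5 * (X 2 - X 3) : MvPolynomial (Fin 4) ℚ)) = ((X 0 - X 3) * (X 1 - X 2) ^ 5 + (X 0 - X 3) ^ 5 * (X 1 - X 2) : MvPolynomial (Fin 4) ℚ) := by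
  rw [renP]
  rw [show ((Perm.sign pm4 : ℤˣ) : ℤ) = 1 from by decide]
  rw [show pm4 (0 : Fin 4) = (0 : Fin 4) from rfl, show pm4 (1 : Fin 4) = (3 : Fin 4) from rfl, show pm4 (2 : Fin 4) = (1 : Fin 4) from rfl, show pm4 (3 : Fin 4) = (2 : Fin 4) from rfl]
  rw [one_smul]
private lemma tm5 : ((Perm.sign pm5 : ℤˣ) : ℤ) • rename pm5 (((X 0 - X 1) * (X 2 - X 3) ^ 5 + (X 0 - X 1) ^ 5 * (X 2 - X 3) : MvPolynomial (Fin 4) ℚ)) = (-(((X 0 - X 3) * (X 2 - X 1) ^ 5 + (X 0 - X 3) ^ 5 * (X 2 - X 1))) : MvPolynomial (Fin 4) ℚ) := by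
  rw [renP]
  rw [show ((Perm.sign pm5 : ℤˣ) : ℤ) = -1 from by decide]
  rw [show pm5 (0 : Fin 4) = (0 : Fin 4) from rfl, show pm5 (1 : Fin 4) = (3 : Fin 4) from rfl, show pm5 (2 : Fin 4) = (2 : Fin 4) from rfl, show pm5 (3 : Fin 4) = (1 : Fin 4) from rfl]
  rw [neg_smul, one_smul]
private lemma tm6 : ((Perm.sign pm6 : ℤˣ) : ℤ) • rename pm6 (((X 0 - X 1) * (X 2 - X 3) ^ 5 + (X 0 - X 1) ^ 5 * (X 2 - X 3) : MvPolynomial (Fin 4) ℚ)) = (-(((X 1 - X 0) * (X 2 - X 3) ^ 5 + (X 1 - X 0) ^ 5 * (X 2 - X 3))) : MvPolynomial (Fin 4) ℚ) := by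
  rw [renP]
  rw [show ((Perm.sign pm6 : ℤˣ) : ℤ) = -1 from by decide]
  rw [show pm6 (0 : Fin 4) = (1 : Fin 4) from rfl, show pm6 (1 : Fin 4) = (0 : Fin 4) from rfl, show pm6 (2 : Fin 4) = (2 : Fin 4) from rfl, show pm6 (3 : Fin 4) = (3 : Fin 4) from rfl]
  rw [neg_smul, one_smul]
private lemma tm7 : ((Perm.sign pm7 : ℤˣ) : ℤ) • rename pm7 (((X 0 - X 1) * (X 2 - X 3) ^ 5 + (X 0 - X 1) ^ 5 * (X 2 - X 3) : MvPolynomial (Fin 4) ℚ)) = ((X 1 - X 0) * (X 3 - X 2) ^ 5 + (X 1 - X 0) ^ 5 * (X 3 - X 2) : MvPolynomial (Fin 4) ℚ) := by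
  rw [renP]
  rw [show ((Perm.sign pm7 : ℤˣ) : ℤ) = 1 from by decide]
  rw [show pm7 (0 : Fin 4) = (1 : Fin 4) from rfl, show pm7 (1 : Fin 4) = (0 : Fin 4) from rfl, show pm7 (2 : Fin 4) = (3 : Fin 4) from rfl, show pm7 (3 : Fin 4) = (2 : Fin 4) from rfl]
  rw [one_smul]
private lemma tm8 : ((Perm.sign pm8 : ℤˣ) : ℤ) • rename pm8 (((X 0 - X 1) * (X 2 - X 3) ^ 5 + (X 0 - X 1) ^ 5 * (X 2 - X 3) : MvPolynomial (Fin 4) ℚ)) = ((X 1 - X 2) * (X 0 - X 3) ^ 5 + (X 1 - X 2) ^ 5 * (X 0 - X 3) : MvPolynomial (Fin 4) ℚ) := by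
  rw [renP]
  rw [show ((Perm.sign pm8 : ℤˣ) : ℤ) = 1 from by decide]
  rw [show pm8 (0 : Fin 4) = (1 : Fin 4) from rfl, show pm8 (1 : Fin 4) = (2 : Fin 4) from rfl, show pm8 (2 : Fin 4) = (0 : Fin 4) from rfl, show pm8 (3 : Fin 4) = (3 : Fin 4) from rfl]
  rw [one_smul]
private lemma tm9 : ((Perm.sign pm9 : ℤˣ) : ℤ) • rename pm9 (((X 0 - X 1) * (X 2 - X 3) ^ 5 + (X 0 - X 1) ^ 5 * (X 2 - X 3) : MvPolynomial (Fin 4) ℚ)) = (-(((X 1 - X 2) * (X 3 - X 0) ^ 5 + (X 1 - X 2) ^ 5 * (X 3 - X 0))) : MvPolynomial (Fin 4) ℚ) := by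
  rw [renP]
  rw [show ((Perm.sign pm9 : ℤˣ) : ℤ) = -1 from by decide]
  rw [show pm9 (0 : Fin 4) = (1 : Fin 4) from rfl, show pm9 (1 : Fin 4) = (2 : Fin 4) from rfl, show pm9 (2 : Fin 4) = (3 : Fin 4) from rfl, show pm9 (3 : Fin 4) = (0 : Fin 4) from rfl]
  rw [neg_smul, one_smul]
private lemma tm10 : ((Perm.sign pm10 : ℤˣ) : ℤ) • rename pm10 (((X 0 - X 1) * (X 2 - X 3) ^ 5 + (X 0 - X 1) ^ 5 * (X 2 - X 3) : MvPolynomial (Fin 4) ℚ)) = (-(((X 1 - X 3) * (X 0 - X 2) ^ 5 + (X 1 - X 3) ^ 5 * (X 0 - X 2))) : MvPolynomial (Fin 4) ℚ) := by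
  rw [renP]
  rw [show ((Perm.sign pm10 : ℤˣ) : ℤ) = -1 from by decide]
  rw [show pm10 (0 : Fin 4) = (1 : Fin 4) from rfl, show pm10 (1 : Fin 4) = (3 : Fin 4) from rfl, show pm10 (2 : Fin 4) = (0 : Fin 4) from rfl, show pm10 (3 : Fin 4) = (2 : Fin 4) from rfl]
  rw [neg_smul, one_smul]
private lemma tm11 : ((Perm.sign pm11 : ℤˣ) : ℤ) • rename pm11 (((X 0 - X 1) * (X 2 - X 3) ^ 5 + (X 0 - X 1) ^ 5 * (X 2 - X 3) : MvPolynomial (Fin 4) ℚ)) = ((X 1 - X 3) * (X 2 - X 0) ^ 5 + (X 1 - X 3) ^ 5 * (X 2 - X 0) : MvPolynomial (Fin 4) ℚ) := by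
  rw [renP]
  rw [show ((Perm.sign pm11 : ℤˣ) : ℤ) = 1 from by decide]
  rw [show pm11 (0 : Fin 4) = (1 : Fin 4) from rfl, show pm11 (1 : Fin 4) = (3 : Fin 4) from rfl, show pm11 (2 : Fin 4) = (2 : Fin 4) from rfl, show pm11 (3 : Fin 4) = (0 : Fin 4) from rfl]
  rw [one_smul]
private lemma tm12 : ((Perm.sign pm12 : ℤˣ) : ℤ) • rename pm12 (((X 0 - X 1) * (X 2 - X 3) ^ 5 + (X 0 - X 1) ^ 5 * (X 2 - X 3) : MvPolynomial (Fin 4) ℚ)) = ((X 2 - X 0) * (X 1 - X 3) ^ 5 + (X 2 - X 0) ^ 5 * (X 1 - X 3) : MvPolynomial (Fin 4) ℚ) := by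
  rw [renP]
  rw [show ((Perm.sign pm12 : ℤˣ) : ℤ) = 1 from by decide]
  rw [show pm12 (0 : Fin 4) = (2 : Fin 4) from rfl, show pm12 (1 : Fin 4) = (0 : Fin 4) from rfl, show pm12 (2 : Fin 4) = (1 : Fin 4) from rfl, show pm12 (3 : Fin 4) = (3 : Fin 4) from rfl]
  rw [one_smul]
private lemma tm13 : ((Perm.sign pm13 : ℤˣ) : ℤ) • rename pm13 (((X 0 - X 1) * (X 2 - X 3) ^ 5 + (X 0 - X 1) ^ 5 * (X 2 - X 3) : MvPolynomial (Fin 4) ℚ)) = (-(((X 2 - X 0) * (X 3 - X 1) ^ 5 + (X 2 - X 0) ^ 5 * (X 3 - X 1))) : MvPolynomial (Fin 4) ℚ) := by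
  rw [renP]
  rw [show ((Perm.sign pm13 : ℤˣ) : ℤ) = -1 from by decide]
  rw [show pm13 (0 : Fin 4) = (2 : Fin 4) from rfl, show pm13 (1 : Fin 4) = (0 : Fin 4) from rfl, show pm13 (2 : Fin 4) = (3 : Fin 4) from rfl, show pm13 (3 : Fin 4) = (1 : Fin 4) from rfl]
  rw [neg_smul, one_smul]
private lemma tm14 : ((Perm.sign pm14 : ℤˣ) : ℤ) • rename pm14 (((X 0 - X 1) * (X 2 - X 3) ^ 5 + (X 0 - X 1) ^ 5 * (X 2 - X 3) : MvPolynomial (Fin 4) ℚ)) = (-(((X 2 - X 1) * (X 0 - X 3) ^ 5 + (X 2 - X 1) ^ 5 * (X 0 - X 3))) : MvPolynomial (Fin 4) ℚ) := by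
  rw [renP]
  rw [show ((Perm.sign pm14 : ℤˣ) : ℤ) = -1 from by decide]
  rw [show pm14 (0 : Fin 4) = (2 : Fin 4) from rfl, show pm14 (1 : Fin 4) = (1 : Fin 4) from rfl, show pm14 (2 : Fin 4) = (0 : Fin 4) from rfl, show pm14 (3 : Fin 4) = (3 : Fin 4) from rfl]
  rw [neg_smul, one_smul]
private lemma tm15 : ((Perm.sign pm15 : ℤˣ) : ℤ) • rename pm15 (((X 0 - X 1) * (X 2 - X 3) ^ 5 + (X 0 - X 1) ^ 5 * (X 2 - X 3) : MvPolynomial (Fin 4) ℚ)) = ((X 2 - X 1) * (X 3 - X 0) ^ 5 + (X 2 - X 1) ^ 5 * (X 3 - X 0) : MvPolynomial (Fin 4) ℚ) := by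
  rw [renP]
  rw [show ((Perm.sign pm15 : ℤˣ) : ℤ) = 1 from by decide]
  rw [show pm15 (0 : Fin 4) = (2 : Fin 4) from rfl, show pm15 (1 : Fin 4) = (1 : Fin 4) from rfl, show pm15 (2 : Fin 4) = (3 : Fin 4) from rfl, show pm15 (3 : Fin 4) = (0 : Fin 4) from rfl]
  rw [one_smul]
private lemma tm16 : ((Perm.sign pm16 : ℤˣ) : ℤ) • rename pm16 (((X 0 - X 1) * (X 2 - X 3) ^ 5 + (X 0 - X 1) ^ 5 * (X 2 - X 3) : MvPolynomial (Fin 4) ℚ)) = ((X 2 - X 3) * (X 0 - X 1) ^ 5 + (X 2 - X 3) ^ 5 * (X 0 - X 1) : MvPolynomial (Fin 4) ℚ) := by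
  rw [renP]
  rw [show ((Perm.sign pm16 : ℤˣ) : ℤ) = 1 from by decide]
  rw [show pm16 (0 : Fin 4) = (2 : Fin 4) from rfl, show pm16 (1 : Fin 4) = (3 : Fin 4) from rfl, show pm16 (2 : Fin 4) = (0 : Fin 4) from rfl, show pm16 (3 : Fin 4) = (1 : Fin 4) from rfl]
  rw [one_smul]
private lemma tm17 : ((Perm.sign pm17 : ℤˣ) : ℤ) • rename pm17 (((X 0 - X 1) * (X 2 - X 3) ^ 5 + (X 0 - X 1) ^ 5 * (X 2 - X 3) : MvPolynomial (Fin 4) ℚ)) = (-(((X 2 - X 3) * (X 1 - X 0) ^ 5 + (X 2 - X 3) ^ 5 * (X 1 - X 0))) : MvPolynomial (Fin 4) ℚ) := by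
  rw [renP]
  rw [show ((Perm.sign pm17 : ℤˣ) : ℤ) = -1 from by decide]
  rw [show pm17 (0 : Fin 4) = (2 : Fin 4) from rfl, show pm17 (1 : Fin 4) = (3 : Fin 4) from rfl, show pm17 (2 : Fin 4) = (1 : Fin 4) from rfl, show pm17 (3 : Fin 4) = (0 : Fin 4) from rfl]
  rw [neg_smul, one_smul]
private lemma tm18 : ((Perm.sign pm18 : ℤˣ) : ℤ) • rename pm18 (((X 0 - X 1) * (X 2 - X 3) ^ 5 + (X 0 - X 1) ^ 5 * (X 2 - X 3) : MvPolynomial (Fin 4) ℚ)) = (-(((X 3 - X 0) * (X 1 - X 2) ^ 5 + (X 3 - X 0) ^ 5 * (X 1 - X 2))) : MvPolynomial (Fin 4) ℚ) := by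
  rw [renP]
  rw [show ((Perm.sign pm18 : ℤˣ) : ℤ) = -1 from by decide]
  rw [show pm18 (0 : Fin 4) = (3 : Fin 4) from rfl, show pm18 (1 : Fin 4) = (0 : Fin 4) from rfl, show pm18 (2 : Fin 4) = (1 : Fin 4) from rfl, show pm18 (3 : Fin 4) = (2 : Fin 4) from rfl]
  rw [neg_smul, one_smul]
private lemma tm19 : ((Perm.sign pm19 : ℤˣ) : ℤ) • rename pm19 (((X 0 - X 1) * (X 2 - X 3) ^ 5 + (X 0 - X 1) ^ 5 * (X 2 - X 3) : MvPolynomial (Fin 4) ℚ)) = ((X 3 - X 0) * (X 2 - X 1) ^ 5 + (X 3 - X 0) ^ 5 * (X 2 - X 1) : MvPolynomial (Fin 4) ℚ) := by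
  rw [renP]
  rw [show ((Perm.sign pm19 : ℤˣ) : ℤ) = 1 from by decide]
  rw [show pm19 (0 : Fin 4) = (3 : Fin 4) from rfl, show pm19 (1 : Fin 4) = (0 : Fin 4) from rfl, show pm19 (2 : Fin 4) = (2 : Fin 4) from rfl, show pm19 (3 : Fin 4) = (1 : Fin 4) from rfl]
  rw [one_smul]
private lemma tm20 : ((Perm.sign pm20 : ℤˣ) : ℤ) • rename pm20 (((X 0 - X 1) * (X 2 - X 3) ^ 5 + (X 0 - X 1) ^ 5 * (X 2 - X 3) : MvPolynomial (Fin 4) ℚ)) = ((X 3 - X 1) * (X 0 - X 2) ^ 5 + (X 3 - X 1) ^ 5 * (X 0 - X 2) : MvPolynomial (Fin 4) ℚ) := by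
  rw [renP]
  rw [show ((Perm.sign pm20 : ℤˣ) : ℤ) = 1 from by decide]
  rw [show pm20 (0 : Fin 4) = (3 : Fin 4) from rfl, show pm20 (1 : Fin 4) = (1 : Fin 4) from rfl, show pm20 (2 : Fin 4) = (0 : Fin 4) from rfl, show pm20 (3 : Fin 4) = (2 : Fin 4) from rfl]
  rw [one_smul]
private lemma tm21 : ((Perm.sign pm21 : ℤˣ) : ℤ) • rename pm21 (((X 0 - X 1) * (X 2 - X 3) ^ 5 + (X 0 - X 1) ^ 5 * (X 2 - X 3) : MvPolynomial (Fin 4) ℚ)) = (-(((X 3 - X 1) * (X 2 - X 0) ^ 5 + (X 3 - X 1) ^ 5 * (X 2 - X 0))) : MvPolynomial (Fin 4) ℚ) := by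
  rw [renP]
  rw [show ((Perm.sign pm21 : ℤˣ) : ℤ) = -1 from by decide]
  rw [show pm21 (0 : Fin 4) = (3 : Fin 4) from rfl, show pm21 (1 : Fin 4) = (1 : Fin 4) from rfl, show pm21 (2 : Fin 4) = (2 : Fin 4) from rfl, show pm21 (3 : Fin 4) = (0 : Fin 4) from rfl]
  rw [neg_smul, one_smul]
private lemma tm22 : ((Perm.sign pm22 : ℤˣ) : ℤ) • rename pm22 (((X 0 - X 1) * (X 2 - X 3) ^ 5 + (X 0 - X 1) ^ 5 * (X 2 - X 3) : MvPolynomial (Fin 4) ℚ)) = (-(((X 3 - X 2) * (X 0 - X 1) ^ 5 + (X 3 - X 2) ^ 5 * (X 0 - X 1))) : MvPolynomial (Fin 4) ℚ) := by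
  rw [renP]
  rw [show ((Perm.sign pm22 : ℤˣ) : ℤ) = -1 from by decide]
  rw [show pm22 (0 : Fin 4) = (3 : Fin 4) from rfl, show pm22 (1 : Fin 4) = (2 : Fin 4) from rfl, show pm22 (2 : Fin 4) = (0 : Fin 4) from rfl, show pm22 (3 : Fin 4) = (1 : Fin 4) from rfl]
  rw [neg_smul, one_smul]
private lemma tm23 : ((Perm.sign pm23 : ℤˣ) : ℤ) • rename pm23 (((X 0 - X 1) * (X 2 - X 3) ^ 5 + (X 0 - X 1) ^ 5 * (X 2 - X 3) : MvPolynomial (Fin 4) ℚ)) = ((X 3 - X 2) * (X 1 - X 0) ^ 5 + (X 3 - X 2) ^ 5 * (X 1 - X 0) : MvPolynomial (Fin 4) ℚ) := by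
  rw [renP]
  rw [show ((Perm.sign pm23 : ℤˣ) : ℤ) = 1 from by decide]
  rw [show pm23 (0 : Fin 4) = (3 : Fin 4) from rfl, show pm23 (1 : Fin 4) = (2 : Fin 4) from rfl, show pm23 (2 : Fin 4) = (1 : Fin 4) from rfl, show pm23 (3 : Fin 4) = (0 : Fin 4) from rfl]
  rw [one_smul]

set_option maxHeartbeats 1000000 in
/-- for `U(4)/T⁴`, the characteristic number `s_{(1,0,0,0,1,0)}` equals
`80`: `L((x₁−x₂)(x₃−x₄)⁵ + (x₁−x₂)⁵(x₃−x₄)) = 80`, where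
`L(P) = (1/Δ₄)·∑_{σ∈S₄} sign(σ)·σ(P)`.  Clearing the Vandermonde denominator `Δ₄`,
this says the antisymmetrization of the given polynomial equals `80·Δ₄`. -/
theorem s_11000010_U4_flag :
    ∑ σ : Perm (Fin 4), (Perm.sign σ : ℤ) •
        rename σ (((X 0 - X 1) * (X 2 - X 3) ^ 5 + (X 0 - X 1) ^ 5 * (X 2 - X 3) :
          MvPolynomial (Fin 4) ℚ)) =
      (80 : ℤ) • ∏ p ∈ Finset.univ.filter (fun p : Fin 4 × Fin 4 => p.1 < p.2),
        ((X p.1 : MvPolynomial (Fin 4) ℚ) - X p.2) := by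
  have huniv : (Finset.univ : Finset (Perm (Fin 4))) = {pm0, pm1, pm2, pm3, pm4, pm5, pm6, pm7, pm8, pm9, pm10, pm11, pm12, pm13, pm14, pm15, pm16, pm17, pm18, pm19, pm20, pm21, pm22, pm23} := by decide
  rw [huniv]
  rw [Finset.sum_insert (by decide)]
  rw [Finset.sum_insert (by decide)]
  rw [Finset.sum_insert (by decide)]
  rw [Finset.sum_insert (by decide)]
  rw [Finset.sum_insert (by decide)]
  rw [Finset.sum_insert (by decide)]
  rw [Finset.sum_insert (by decide)]
  rw [Finset.sum_insert (by decide)]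
  rw [Finset.sum_insert (by decide)]
  rw [Finset.sum_insert (by decide)]
  rw [Finset.sum_insert (by decide)]
  rw [Finset.sum_insert (by decide)]
  rw [Finset.sum_insert (by decide)]
  rw [Finset.sum_insert (by decide)]
  rw [Finset.sum_insert (by decide)]
  rw [Finset.sum_insert (by decide)]
  rw [Finset.sum_insert (by decide)]
  rw [Finset.sum_insert (by decide)]
  rw [Finset.sum_insert (by decide)]
  rw [Finset.sum_insert (by decide)]
  rw [Finset.sum_insert (by decide)]
  rw [Finset.sum_insert (by decide)]
  rw [Finset.sum_insert (by decide)]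
  rw [Finset.sum_singleton]
  rw [tm0, tm1, tm2, tm3, tm4, tm5, tm6, tm7, tm8, tm9, tm10, tm11, tm12, tm13, tm14, tm15, tm16, tm17, tm18, tm19, tm20, tm21, tm22, tm23]
  rw [show (Finset.univ.filter (fun p : Fin 4 × Fin 4 => p.1 < p.2)) = ({(0,1),(0,2),(0,3),(1,2),(1,3),(2,3)} : Finset (Fin 4 × Fin 4)) from by decide]
  rw [Finset.prod_insert (by decide)]
  rw [Finset.prod_insert (by decide)]
  rw [Finset.prod_insert (by decide)]
  rw [Finset.prod_insert (by decide)]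
  rw [Finset.prod_insert (by decide)]
  rw [Finset.prod_singleton]
  rw [zsmul_eq_mul]
  push_cast
  ring
end

section
/- For the Grassmannian G_{4,2} = U(4)/(U(2)×U(2)) with its invariant complex structure, the localization expression (1/4)·L( (x_1−x_2)(x_3−x_4)·∏_{i∈{1,2}, j∈{3,4}} f(t(x_i−x_j)) ), where f(t) = 1 + a_1t + a_2t² + a_3t³ + a_4t⁴ and L is the alternating operator for S_4, has t⁴-coefficient equal to 2(3a_1⁴ + 12a_1²a_2 + 7a_2² + 2a_1a_3 − 10a_4). -/
open Polynomial Equiv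

noncomputable def g {F : Type*} [Field F] (a0 a1 a2 a3 c : F) : F[X] :=
  C 1 + C (a0 * c) * X + C (a1 * c ^ 2) * X ^ 2 + C (a2 * c ^ 3) * X ^ 3 +
      C (a3 * c ^ 4) * X ^ 4

lemma g_def {F : Type*} [Field F] (a0 a1 a2 a3 c : F) :
    C 1 + C (a0 * c) * X + C (a1 * c ^ 2) * X ^ 2 + C (a2 * c ^ 3) * X ^ 3 +
      C (a3 * c ^ 4) * X ^ 4 = g a0 a1 a2 a3 c := rfl

lemma gcoeff {F : Type*} [Field F] (a0 a1 a2 a3 c : F) :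
    (g a0 a1 a2 a3 c).coeff 0 = 1 ∧
    (g a0 a1 a2 a3 c).coeff 1 = a0 * c ∧
    (g a0 a1 a2 a3 c).coeff 2 = a1 * c ^ 2 ∧
    (g a0 a1 a2 a3 c).coeff 3 = a2 * c ^ 3 ∧
    (g a0 a1 a2 a3 c).coeff 4 = a3 * c ^ 4 := by
  refine ⟨?_, ?_, ?_, ?_, ?_⟩ <;>
  · unfold g
    simp only [coeff_add, ← C_pow, ← C_mul, coeff_C_mul, coeff_X_pow, coeff_C, coeff_X,
      coeff_one]
    norm_num

lemma prod4coeff {F : Type*} [Field F] (a0 a1 a2 a3 c1 c2 c3 c4 : F) :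
    (g a0 a1 a2 a3 c1 * g a0 a1 a2 a3 c2 * g a0 a1 a2 a3 c3 * g a0 a1 a2 a3 c4).coeff 4 =
      a3 * (c1^4 + c2^4 + c3^4 + c4^4)
      + a2 * a0 * (c1^3*c2 + c1^3*c3 + c1^3*c4 + c2^3*c1 + c2^3*c3 + c2^3*c4
          + c3^3*c1 + c3^3*c2 + c3^3*c4 + c4^3*c1 + c4^3*c2 + c4^3*c3)
      + a1^2 * (c1^2*c2^2 + c1^2*c3^2 + c1^2*c4^2 + c2^2*c3^2 + c2^2*c4^2 + c3^2*c4^2)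
      + a1 * a0^2 * (c1^2*c2*c3 + c1^2*c2*c4 + c1^2*c3*c4 + c2^2*c1*c3 + c2^2*c1*c4
          + c2^2*c3*c4 + c3^2*c1*c2 + c3^2*c1*c4 + c3^2*c2*c4 + c4^2*c1*c2 + c4^2*c1*c3
          + c4^2*c2*c3)
      + a0^4 * (c1*c2*c3*c4) := by
  obtain ⟨p0, p1, p2, p3, p4⟩ := gcoeff a0 a1 a2 a3 c1
  obtain ⟨q0, q1, q2, q3, q4⟩ := gcoeff a0 a1 a2 a3 c2
  obtain ⟨r0, r1, r2, r3, r4⟩ := gcoeff a0 a1 a2 a3 c3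
  obtain ⟨s0, s1, s2, s3, s4⟩ := gcoeff a0 a1 a2 a3 c4
  simp only [coeff_mul, Finset.Nat.sum_antidiagonal_eq_sum_range_succ_mk,
    Finset.sum_range_succ, Finset.sum_range_zero]
  norm_num [p0, p1, p2, p3, p4, q0, q1, q2, q3, q4, r0, r1, r2, r3, r4, s0, s1, s2, s3, s4]
  ring

def ps : Fin 24 → Equiv.Perm (Fin 4) :=
  ![
    ⟨![0,1,2,3], ![0,1,2,3], by decide, by decide⟩,
    ⟨![0,1,3,2], ![0,1,3,2], by decide, by decide⟩,
    ⟨![0,2,1,3], ![0,2,1,3], by decide, by decide⟩,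
    ⟨![0,2,3,1], ![0,3,1,2], by decide, by decide⟩,
    ⟨![0,3,1,2], ![0,2,3,1], by decide, by decide⟩,
    ⟨![0,3,2,1], ![0,3,2,1], by decide, by decide⟩,
    ⟨![1,0,2,3], ![1,0,2,3], by decide, by decide⟩,
    ⟨![1,0,3,2], ![1,0,3,2], by decide, by decide⟩,
    ⟨![1,2,0,3], ![2,0,1,3], by decide, by decide⟩,
    ⟨![1,2,3,0], ![3,0,1,2], by decide, by decide⟩,
    ⟨![1,3,0,2], ![2,0,3,1], by decide, by decide⟩,
    ⟨![1,3,2,0], ![3,0,2,1], by decide, by decide⟩,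
    ⟨![2,0,1,3], ![1,2,0,3], by decide, by decide⟩,
    ⟨![2,0,3,1], ![1,3,0,2], by decide, by decide⟩,
    ⟨![2,1,0,3], ![2,1,0,3], by decide, by decide⟩,
    ⟨![2,1,3,0], ![3,1,0,2], by decide, by decide⟩,
    ⟨![2,3,0,1], ![2,3,0,1], by decide, by decide⟩,
    ⟨![2,3,1,0], ![3,2,0,1], by decide, by decide⟩,
    ⟨![3,0,1,2], ![1,2,3,0], by decide, by decide⟩,
    ⟨![3,0,2,1], ![1,3,2,0], by decide, by decide⟩,
    ⟨![3,1,0,2], ![2,1,3,0], by decide, by decide⟩,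
    ⟨![3,1,2,0], ![3,1,2,0], by decide, by decide⟩,
    ⟨![3,2,0,1], ![2,3,1,0], by decide, by decide⟩,
    ⟨![3,2,1,0], ![3,2,1,0], by decide, by decide⟩]

lemma ps_bij : Function.Bijective ps := by decide

lemma sum_ps {M : Type*} [AddCommMonoid M] (f : Perm (Fin 4) → M) :
    ∑ σ : Perm (Fin 4), f σ = ∑ i : Fin 24, f (ps i) :=
  (Fintype.sum_bijective ps ps_bij _ _ (fun _ => rfl)).symm

lemma sum24 {M : Type*} [AddCommMonoid M] (h : Fin 24 → M) :
    ∑ i, h i = h 0 + h 1 + h 2 + h 3 + h 4 + h 5 + h 6 + h 7 + h 8 + h 9 + h 10 + h 11 +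
      h 12 + h 13 + h 14 + h 15 + h 16 + h 17 + h 18 + h 19 + h 20 + h 21 + h 22 + h 23 := by
  simp [Fin.sum_univ_succ]
  abel

lemma psS0 : ((Equiv.Perm.sign (ps 0) : ℤˣ) : ℤ) = 1 := by decide
lemma psA0_0 : ps 0 (0 : Fin 4) = 0 := by decide
lemma psA0_1 : ps 0 (1 : Fin 4) = 1 := by decide
lemma psA0_2 : ps 0 (2 : Fin 4) = 2 := by decide
lemma psA0_3 : ps 0 (3 : Fin 4) = 3 := by decide
lemma psS1 : ((Equiv.Perm.sign (ps 1) : ℤˣ) : ℤ) = -1 := by decide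
lemma psA1_0 : ps 1 (0 : Fin 4) = 0 := by decide
lemma psA1_1 : ps 1 (1 : Fin 4) = 1 := by decide
lemma psA1_2 : ps 1 (2 : Fin 4) = 3 := by decide
lemma psA1_3 : ps 1 (3 : Fin 4) = 2 := by decide
lemma psS2 : ((Equiv.Perm.sign (ps 2) : ℤˣ) : ℤ) = -1 := by decide
lemma psA2_0 : ps 2 (0 : Fin 4) = 0 := by decide
lemma psA2_1 : ps 2 (1 : Fin 4) = 2 := by decide
lemma psA2_2 : ps 2 (2 : Fin 4) = 1 := by decide
lemma psA2_3 : ps 2 (3 : Fin 4) = 3 := by decide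
lemma psS3 : ((Equiv.Perm.sign (ps 3) : ℤˣ) : ℤ) = 1 := by decide
lemma psA3_0 : ps 3 (0 : Fin 4) = 0 := by decide
lemma psA3_1 : ps 3 (1 : Fin 4) = 2 := by decide
lemma psA3_2 : ps 3 (2 : Fin 4) = 3 := by decide
lemma psA3_3 : ps 3 (3 : Fin 4) = 1 := by decide
lemma psS4 : ((Equiv.Perm.sign (ps 4) : ℤˣ) : ℤ) = 1 := by decide
lemma psA4_0 : ps 4 (0 : Fin 4) = 0 := by decide
lemma psA4_1 : ps 4 (1 : Fin 4) = 3 := by decide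
lemma psA4_2 : ps 4 (2 : Fin 4) = 1 := by decide
lemma psA4_3 : ps 4 (3 : Fin 4) = 2 := by decide
lemma psS5 : ((Equiv.Perm.sign (ps 5) : ℤˣ) : ℤ) = -1 := by decide
lemma psA5_0 : ps 5 (0 : Fin 4) = 0 := by decide
lemma psA5_1 : ps 5 (1 : Fin 4) = 3 := by decide
lemma psA5_2 : ps 5 (2 : Fin 4) = 2 := by decide
lemma psA5_3 : ps 5 (3 : Fin 4) = 1 := by decide
lemma psS6 : ((Equiv.Perm.sign (ps 6) : ℤˣ) : ℤ) = -1 := by decide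
lemma psA6_0 : ps 6 (0 : Fin 4) = 1 := by decide
lemma psA6_1 : ps 6 (1 : Fin 4) = 0 := by decide
lemma psA6_2 : ps 6 (2 : Fin 4) = 2 := by decide
lemma psA6_3 : ps 6 (3 : Fin 4) = 3 := by decide
lemma psS7 : ((Equiv.Perm.sign (ps 7) : ℤˣ) : ℤ) = 1 := by decide
lemma psA7_0 : ps 7 (0 : Fin 4) = 1 := by decide
lemma psA7_1 : ps 7 (1 : Fin 4) = 0 := by decide
lemma psA7_2 : ps 7 (2 : Fin 4) = 3 := by decide
lemma psA7_3 : ps 7 (3 : Fin 4) = 2 := by decide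
lemma psS8 : ((Equiv.Perm.sign (ps 8) : ℤˣ) : ℤ) = 1 := by decide
lemma psA8_0 : ps 8 (0 : Fin 4) = 1 := by decide
lemma psA8_1 : ps 8 (1 : Fin 4) = 2 := by decide
lemma psA8_2 : ps 8 (2 : Fin 4) = 0 := by decide
lemma psA8_3 : ps 8 (3 : Fin 4) = 3 := by decide
lemma psS9 : ((Equiv.Perm.sign (ps 9) : ℤˣ) : ℤ) = -1 := by decide
lemma psA9_0 : ps 9 (0 : Fin 4) = 1 := by decide
lemma psA9_1 : ps 9 (1 : Fin 4) = 2 := by decide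
lemma psA9_2 : ps 9 (2 : Fin 4) = 3 := by decide
lemma psA9_3 : ps 9 (3 : Fin 4) = 0 := by decide
lemma psS10 : ((Equiv.Perm.sign (ps 10) : ℤˣ) : ℤ) = -1 := by decide
lemma psA10_0 : ps 10 (0 : Fin 4) = 1 := by decide
lemma psA10_1 : ps 10 (1 : Fin 4) = 3 := by decide
lemma psA10_2 : ps 10 (2 : Fin 4) = 0 := by decide
lemma psA10_3 : ps 10 (3 : Fin 4) = 2 := by decide
lemma psS11 : ((Equiv.Perm.sign (ps 11) : ℤˣ) : ℤ) = 1 := by decide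
lemma psA11_0 : ps 11 (0 : Fin 4) = 1 := by decide
lemma psA11_1 : ps 11 (1 : Fin 4) = 3 := by decide
lemma psA11_2 : ps 11 (2 : Fin 4) = 2 := by decide
lemma psA11_3 : ps 11 (3 : Fin 4) = 0 := by decide
lemma psS12 : ((Equiv.Perm.sign (ps 12) : ℤˣ) : ℤ) = 1 := by decide
lemma psA12_0 : ps 12 (0 : Fin 4) = 2 := by decide
lemma psA12_1 : ps 12 (1 : Fin 4) = 0 := by decide
lemma psA12_2 : ps 12 (2 : Fin 4) = 1 := by decide
lemma psA12_3 : ps 12 (3 : Fin 4) = 3 := by decide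
lemma psS13 : ((Equiv.Perm.sign (ps 13) : ℤˣ) : ℤ) = -1 := by decide
lemma psA13_0 : ps 13 (0 : Fin 4) = 2 := by decide
lemma psA13_1 : ps 13 (1 : Fin 4) = 0 := by decide
lemma psA13_2 : ps 13 (2 : Fin 4) = 3 := by decide
lemma psA13_3 : ps 13 (3 : Fin 4) = 1 := by decide
lemma psS14 : ((Equiv.Perm.sign (ps 14) : ℤˣ) : ℤ) = -1 := by decide
lemma psA14_0 : ps 14 (0 : Fin 4) = 2 := by decide
lemma psA14_1 : ps 14 (1 : Fin 4) = 1 := by decide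
lemma psA14_2 : ps 14 (2 : Fin 4) = 0 := by decide
lemma psA14_3 : ps 14 (3 : Fin 4) = 3 := by decide
lemma psS15 : ((Equiv.Perm.sign (ps 15) : ℤˣ) : ℤ) = 1 := by decide
lemma psA15_0 : ps 15 (0 : Fin 4) = 2 := by decide
lemma psA15_1 : ps 15 (1 : Fin 4) = 1 := by decide
lemma psA15_2 : ps 15 (2 : Fin 4) = 3 := by decide
lemma psA15_3 : ps 15 (3 : Fin 4) = 0 := by decide
lemma psS16 : ((Equiv.Perm.sign (ps 16) : ℤˣ) : ℤ) = 1 := by decide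
lemma psA16_0 : ps 16 (0 : Fin 4) = 2 := by decide
lemma psA16_1 : ps 16 (1 : Fin 4) = 3 := by decide
lemma psA16_2 : ps 16 (2 : Fin 4) = 0 := by decide
lemma psA16_3 : ps 16 (3 : Fin 4) = 1 := by decide
lemma psS17 : ((Equiv.Perm.sign (ps 17) : ℤˣ) : ℤ) = -1 := by decide
lemma psA17_0 : ps 17 (0 : Fin 4) = 2 := by decide
lemma psA17_1 : ps 17 (1 : Fin 4) = 3 := by decide
lemma psA17_2 : ps 17 (2 : Fin 4) = 1 := by decide
lemma psA17_3 : ps 17 (3 : Fin 4) = 0 := by decide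
lemma psS18 : ((Equiv.Perm.sign (ps 18) : ℤˣ) : ℤ) = -1 := by decide
lemma psA18_0 : ps 18 (0 : Fin 4) = 3 := by decide
lemma psA18_1 : ps 18 (1 : Fin 4) = 0 := by decide
lemma psA18_2 : ps 18 (2 : Fin 4) = 1 := by decide
lemma psA18_3 : ps 18 (3 : Fin 4) = 2 := by decide
lemma psS19 : ((Equiv.Perm.sign (ps 19) : ℤˣ) : ℤ) = 1 := by decide
lemma psA19_0 : ps 19 (0 : Fin 4) = 3 := by decide
lemma psA19_1 : ps 19 (1 : Fin 4) = 0 := by decide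
lemma psA19_2 : ps 19 (2 : Fin 4) = 2 := by decide
lemma psA19_3 : ps 19 (3 : Fin 4) = 1 := by decide
lemma psS20 : ((Equiv.Perm.sign (ps 20) : ℤˣ) : ℤ) = 1 := by decide
lemma psA20_0 : ps 20 (0 : Fin 4) = 3 := by decide
lemma psA20_1 : ps 20 (1 : Fin 4) = 1 := by decide
lemma psA20_2 : ps 20 (2 : Fin 4) = 0 := by decide
lemma psA20_3 : ps 20 (3 : Fin 4) = 2 := by decide
lemma psS21 : ((Equiv.Perm.sign (ps 21) : ℤˣ) : ℤ) = -1 := by decide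
lemma psA21_0 : ps 21 (0 : Fin 4) = 3 := by decide
lemma psA21_1 : ps 21 (1 : Fin 4) = 1 := by decide
lemma psA21_2 : ps 21 (2 : Fin 4) = 2 := by decide
lemma psA21_3 : ps 21 (3 : Fin 4) = 0 := by decide
lemma psS22 : ((Equiv.Perm.sign (ps 22) : ℤˣ) : ℤ) = -1 := by decide
lemma psA22_0 : ps 22 (0 : Fin 4) = 3 := by decide
lemma psA22_1 : ps 22 (1 : Fin 4) = 2 := by decide
lemma psA22_2 : ps 22 (2 : Fin 4) = 0 := by decide
lemma psA22_3 : ps 22 (3 : Fin 4) = 1 := by decide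
lemma psS23 : ((Equiv.Perm.sign (ps 23) : ℤˣ) : ℤ) = 1 := by decide
lemma psA23_0 : ps 23 (0 : Fin 4) = 3 := by decide
lemma psA23_1 : ps 23 (1 : Fin 4) = 2 := by decide
lemma psA23_2 : ps 23 (2 : Fin 4) = 1 := by decide
lemma psA23_3 : ps 23 (3 : Fin 4) = 0 := by decide

set_option maxHeartbeats 4000000 in
/-- for the Grassmannian `G_{4,2} = U(4)/(U(2)×U(2))`, the coefficient of
`t⁴` in `(1/4)·L( (x₁−x₂)(x₃−x₄)·∏_{i∈{1,2},j∈{3,4}} f(t(x_i−x_j)) )`, with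
`f(t) = 1 + a₁t + a₂t² + a₃t³ + a₄t⁴` and `L(P) = (1/Δ₄)∑_{σ∈S₄} sign(σ)σ(P)`, equals
`2(3a₁⁴ + 12a₁²a₂ + 7a₂² + 2a₁a₃ − 10a₄)`; stated for all distinct values of the `x_i`
and all values of the `a_i` in a field of characteristic `0`. -/
theorem grassmannian_G42_cobordism_class {F : Type*} [Field F] [CharZero F]
    (x : Fin 4 → F) (hx : Function.Injective x) (a : Fin 4 → F) :
    (let f : F → Polynomial F := fun c =>
      C 1 + C (a 0 * c) * X + C (a 1 * c ^ 2) * X ^ 2 + C (a 2 * c ^ 3) * X ^ 3 +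
        C (a 3 * c ^ 4) * X ^ 4
    let Δ : F := ∏ p ∈ Finset.univ.filter (fun p : Fin 4 × Fin 4 => p.1 < p.2),
      (x p.1 - x p.2)
    Polynomial.coeff
      ((4 : F)⁻¹ • C Δ⁻¹ *
        ∑ σ : Perm (Fin 4), (Perm.sign σ : ℤ) •
          (C ((x (σ 0) - x (σ 1)) * (x (σ 2) - x (σ 3))) *
            (f (x (σ 0) - x (σ 2)) * f (x (σ 0) - x (σ 3)) *
              f (x (σ 1) - x (σ 2)) * f (x (σ 1) - x (σ 3))))) 4) =
      2 * (3 * a 0 ^ 4 + 12 * a 0 ^ 2 * a 1 + 7 * a 1 ^ 2 + 2 * a 0 * a 2 - 10 * a 3) := by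
  have h01 : x 0 - x 1 ≠ 0 := sub_ne_zero_of_ne (fun h => absurd (hx h) (by decide))
  have h02 : x 0 - x 2 ≠ 0 := sub_ne_zero_of_ne (fun h => absurd (hx h) (by decide))
  have h03 : x 0 - x 3 ≠ 0 := sub_ne_zero_of_ne (fun h => absurd (hx h) (by decide))
  have h12 : x 1 - x 2 ≠ 0 := sub_ne_zero_of_ne (fun h => absurd (hx h) (by decide))
  have h13 : x 1 - x 3 ≠ 0 := sub_ne_zero_of_ne (fun h => absurd (hx h) (by decide))
  have h23 : x 2 - x 3 ≠ 0 := sub_ne_zero_of_ne (fun h => absurd (hx h) (by decide))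
  dsimp only
  rw [show (Finset.univ.filter fun p : Fin 4 × Fin 4 => p.1 < p.2) =
      ({(0,1),(0,2),(0,3),(1,2),(1,3),(2,3)} : Finset (Fin 4 × Fin 4)) from by decide]
  rw [Finset.prod_insert (by decide), Finset.prod_insert (by decide),
    Finset.prod_insert (by decide), Finset.prod_insert (by decide),
    Finset.prod_insert (by decide), Finset.prod_singleton]
  simp only [g_def]
  simp only [smul_mul_assoc, coeff_smul, coeff_C_mul, finset_sum_coeff, prod4coeff,
    smul_eq_mul]
  rw [sum_ps, sum24]
  simp only [psS0, psS1, psS2, psS3, psS4, psS5, psS6, psS7, psS8, psS9, psS10, psS11, psS12, psS13, psS14, psS15, psS16, psS17, psS18, psS19, psS20, psS21, psS22, psS23, psA0_0, psA0_1, psA0_2, psA0_3, psA1_0, psA1_1, psA1_2, psA1_3, psA2_0, psA2_1, psA2_2, psA2_3, psA3_0, psA3_1, psA3_2, psA3_3, psA4_0, psA4_1, psA4_2, psA4_3, psA5_0, psA5_1, psA5_2, psA5_3, psA6_0, psA6_1, psA6_2, psA6_3, psA7_0, psA7_1, psA7_2, psA7_3, psA8_0, psA8_1, psA8_2, psA8_3,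 psA9_0, psA9_1, psA9_2, psA9_3, psA10_0, psA10_1, psA10_2, psA10_3, psA11_0, psA11_1, psA11_2, psA11_3, psA12_0, psA12_1, psA12_2, psA12_3, psA13_0, psA13_1, psA13_2, psA13_3, psA14_0, psA14_1, psA14_2, psA14_3, psA15_0, psA15_1, psA15_2, psA15_3, psA16_0, psA16_1, psA16_2, psA16_3, psA17_0, psA17_1, psA17_2, psA17_3, psA18_0, psA18_1, psA18_2, psA18_3, psA19_0, psA19_1, psA19_2, psA19_3, psA20_0, psA20_1, psA20_2, psA20_3, psA21_0, psA21_1, psA21_2, psA21_3, psA22_0, psA22_1, psA22_2, psA22_3, psA23_0, psA23_1, psA23_2, psA23_3, one_smul, neg_one_zsmul]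
  have hP : (x 0 - x 1) * ((x 0 - x 2) * ((x 0 - x 3) * ((x 1 - x 2) * ((x 1 - x 3) *
      (x 2 - x 3))))) ≠ 0 :=
    mul_ne_zero h01 (mul_ne_zero h02 (mul_ne_zero h03 (mul_ne_zero h12
      (mul_ne_zero h13 h23))))
  have h4 : (4 : F) ≠ 0 := by norm_num
  rw [← mul_assoc, ← mul_inv, inv_mul_eq_div, div_eq_iff (mul_ne_zero h4 hP)]
  ring
end
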